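/- Under the recursive additive-confounder model X₁ = g₁(H) + ε₁, X_j = f_j(X₁,...,X_{j−1}) + g_j(H) + ε_j (j = 2,...,p), with ε₁,...,ε_p i.i.d.-independent mean-zero noises independent of H, define S_j = E[X_j | H]. Then for each j there exists a measurable function r_j such that g_j(H) = r_j(S₁,...,S_j) almost surely; in particular, g₁(H) = S₁. -/

import Mathlib

/-!
Writing `u_j = g_j(H) + ε_j`, the recursion `X_j = f_j(X_{<j}) + u_j` makes `X_{<j}` a measurable
function of `u_{<j}`. Since the noises are independent of `H`, conditioning on `H` freezes
`g_{<j}(H)` and averages over the noises, so `S_j = χ_j(g_{<j}(H)) + g_j(H)` for an explicit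
measurable `χ_j` (and `χ_0 = 0` because `f_0 = 0`). This triangular system is again a recursion
of the same shape, `g_j(H) = -χ_j(g_{<j}(H)) + S_j`, so `g_{≤j}(H)` is a measurable function of
`S_{≤j}`.
-/

open MeasureTheory ProbabilityTheory

section RecursiveSystem

variable {α : Type*} [Add α] (f : (j : ℕ) → (Fin j → α) → α)

/-- `recursiveSolution f n u` is the solution `x : Fin n → α` of `x_j = f_j(x_{<j}) + u_j`. -/
def recursiveSolution : (n : ℕ) → (Fin n → α) → Fin n → α
  | 0, _ => Fin.elim0
  | j + 1, u =>
    let x := recursiveSolution j (Fin.init u)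
    Fin.snoc x (f j x + u (Fin.last j))

theorem recursiveSolution_eq {n : ℕ} {x u : ℕ → α}
    (h : ∀ j < n, x j = f j (fun k : Fin j => x k) + u j) :
    ∀ j ≤ n, recursiveSolution f j (fun k : Fin j => u k) = fun k : Fin j => x k := by
  intro j hj
  induction j with
  | zero => exact funext fun k => k.elim0
  | succ j ih =>
    have hinit : recursiveSolution f j (Fin.init fun k : Fin (j + 1) => u k) =
        fun k : Fin j => x k := ih (by omega)
    funext k
    induction k using Fin.lastCases with
    | last => simp [recursiveSolution, hinit, h j (by omega)]
    | cast k => simp [recursiveSolution, hinit]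

theorem measurable_recursiveSolution [MeasurableSpace α] [MeasurableAdd₂ α]
    (hf : ∀ j, Measurable (f j)) (j : ℕ) : Measurable (recursiveSolution f j) := by
  induction j with
  | zero => exact measurable_pi_lambda _ fun k => k.elim0
  | succ j ih =>
    have hinit : Measurable (fun u : Fin (j + 1) → α => recursiveSolution f j (Fin.init u)) :=
      ih.comp (measurable_pi_lambda _ fun k => measurable_pi_apply _)
    refine measurable_pi_lambda _ fun k => ?_
    induction k using Fin.lastCases with
    | last =>
      simp only [recursiveSolution, Fin.snoc_last]
      exact ((hf j).comp hinit).add (measurable_pi_apply _)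
    | cast k =>
      simp only [recursiveSolution, Fin.snoc_castSucc]
      exact (measurable_pi_apply k).comp hinit

end RecursiveSystem

namespace ProbabilityTheory

variable {Ω β E : Type*} {mΩ : MeasurableSpace Ω} [MeasurableSpace β] [MeasurableSpace E]
  {μ : Measure Ω} [IsProbabilityMeasure μ] {X : Ω → β} {Y : Ω → E}

theorem IndepFun.condExp_comap_ae_eq_integral [StandardBorelSpace E] [Nonempty E]
    (hXY : IndepFun X Y μ) (hX : Measurable X) (hY : Measurable Y)
    {Φ : β × E → ℝ} (hΦ : Measurable Φ)
    (hint : Integrable (fun ω => Φ (X ω, Y ω)) μ) :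
    μ[fun ω => Φ (X ω, Y ω) | MeasurableSpace.comap X inferInstance]
      =ᵐ[μ] fun ω => ∫ y, Φ (X ω, y) ∂(μ.map Y) := by
  have hconst : condDistrib Y X μ =ᵐ[μ.map X] Kernel.const β (μ.map Y) := by
    rw [condDistrib_ae_eq_iff_measure_eq_compProd X hY.aemeasurable, Measure.compProd_const]
    exact (indepFun_iff_map_prod_eq_prod_map_map hX.aemeasurable hY.aemeasurable).1 hXY
  filter_upwards [condExp_prod_ae_eq_integral_condDistrib hX hY.aemeasurable
    hΦ.stronglyMeasurable hint, ae_of_ae_map hX.aemeasurable hconst] with ω hcond hω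
  rw [hcond, hω, Kernel.const_apply]

theorem IndepFun.ae_integrable_comp_prodMk (hXY : IndepFun X Y μ) (hX : Measurable X)
    (hY : Measurable Y) {Φ : β × E → ℝ} (hΦ : Measurable Φ)
    (hint : Integrable (fun ω => Φ (X ω, Y ω)) μ) :
    ∀ᵐ ω ∂μ, Integrable (fun y => Φ (X ω, y)) (μ.map Y) := by
  have hprod : Integrable Φ ((μ.map X).prod (μ.map Y)) := by
    rw [← (indepFun_iff_map_prod_eq_prod_map_map hX.aemeasurable hY.aemeasurable).1 hXY]
    exact (integrable_map_measure hΦ.aestronglyMeasurable (hX.prodMk hY).aemeasurable).2 hint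
  exact ae_of_ae_map hX.aemeasurable hprod.prod_right_ae

theorem IndepFun.condExp_comap_add_ae_eq [StandardBorelSpace E] [Nonempty E]
    (hXY : IndepFun X Y μ) (hX : Measurable X) (hY : Measurable Y)
    {φ : β × E → ℝ} (hφ : Measurable φ) {c : β → ℝ} (hc : Measurable c)
    (hint : Integrable (fun ω => φ (X ω, Y ω) + c (X ω)) μ) :
    μ[fun ω => φ (X ω, Y ω) + c (X ω) | MeasurableSpace.comap X inferInstance]
      =ᵐ[μ] fun ω => ∫ y, φ (X ω, y) ∂(μ.map Y) + c (X ω) := by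
  have hY' : IsProbabilityMeasure (μ.map Y) := Measure.isProbabilityMeasure_map hY.aemeasurable
  have hΦ : Measurable fun q : β × E => φ q + c q.1 := hφ.add (hc.comp measurable_fst)
  filter_upwards [hXY.condExp_comap_ae_eq_integral hX hY hΦ hint,
    hXY.ae_integrable_comp_prodMk hX hY hΦ hint] with ω hω hslice
  have hφslice : Integrable (fun y => φ (X ω, y)) (μ.map Y) := by
    refine (hslice.sub (integrable_const (c (X ω)))).congr (ae_of_all _ fun y => ?_)
    simp
  rw [hω, integral_add hφslice (integrable_const _), integral_const, probReal_univ, one_smul]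

theorem IndepFun.condExp_comap_right_ae_eq_integral {Z : Ω → ℝ} (hZX : IndepFun Z X μ)
    (hZ : Measurable Z) (hX : Measurable X) :
    μ[Z | MeasurableSpace.comap X inferInstance] =ᵐ[μ] fun _ => ∫ ω, Z ω ∂μ :=
  condExp_indep_eq hZ.comap_le hX.comap_le (comap_measurable Z).stronglyMeasurable hZX

end ProbabilityTheory

section AdditiveConfounderModel

variable {Ω 𝓗 : Type*} {mΩ : MeasurableSpace Ω} [MeasurableSpace 𝓗]

theorem ae_eq_recursiveSolution_of_ae_eq_add {μ : Measure Ω} {p : ℕ} {a s : ℕ → Ω → ℝ}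
    {χ : (j : ℕ) → (Fin j → ℝ) → ℝ}
    (h : ∀ j < p, s j =ᵐ[μ] fun ω => χ j (fun k => a k ω) + a j ω) {j : ℕ} (hj : j < p) :
    a j =ᵐ[μ] fun ω =>
      recursiveSolution (fun i v => -χ i v) (j + 1) (fun k => s k ω) (Fin.last j) := by
  have hall : ∀ᵐ ω ∂μ, ∀ i : Fin p, s i ω = χ i (fun k => a k ω) + a i ω :=
    ae_all_iff.2 fun i => h i i.isLt
  filter_upwards [hall] with ω hω
  have hsol := recursiveSolution_eq (fun i v => -χ i v) (x := (a · ω)) (u := (s · ω))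
    (fun i hi => by linarith [hω ⟨i, hi⟩]) (j + 1) hj
  exact (congrFun hsol (Fin.last j)).symm

/-- `χ_j(v) = E[f_j(X_{<j})]` with the confounder contributions `g_{<j}(H)` frozen at `v`. -/
noncomputable def parentTermMean (μ : Measure Ω) (ε : ℕ → Ω → ℝ)
    (f : (j : ℕ) → (Fin j → ℝ) → ℝ) (j : ℕ) (v : Fin j → ℝ) : ℝ :=
  ∫ e, f j (recursiveSolution f j (v + e)) ∂μ.map fun ω (k : Fin j) => ε k ω

theorem measurable_parentTermMean (μ : Measure Ω) [SFinite μ] (ε : ℕ → Ω → ℝ)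
    {f : (j : ℕ) → (Fin j → ℝ) → ℝ} (hf : ∀ j, Measurable (f j)) (j : ℕ) :
    Measurable (parentTermMean μ ε f j) :=
  ((hf j).comp ((measurable_recursiveSolution f hf j).comp
    (measurable_fst.add measurable_snd))).stronglyMeasurable.integral_prod_right'.measurable

theorem condExp_comap_ae_eq_parentTermMean_add (μ : Measure Ω) [IsProbabilityMeasure μ]
    {p : ℕ} {H : Ω → 𝓗} (hH : Measurable H)
    {ε : ℕ → Ω → ℝ} (hεm : ∀ j, Measurable (ε j))
    (hεint : ∀ j, Integrable (ε j) μ) (hεmean : ∀ j, ∫ ω, ε j ω ∂μ = 0)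
    (hεH : IndepFun (fun ω (i : Fin p) => ε i ω) H μ)
    {g : ℕ → 𝓗 → ℝ} (hg : ∀ j, Measurable (g j))
    {f : (j : ℕ) → (Fin j → ℝ) → ℝ} (hf : ∀ j, Measurable (f j))
    {X : ℕ → Ω → ℝ} (hXint : ∀ j, j < p → Integrable (X j) μ)
    (hX : ∀ j, j < p → ∀ ω, X j ω = f j (fun k => X k ω) + g j (H ω) + ε j ω)
    {j : ℕ} (hj : j < p) :
    μ[X j | MeasurableSpace.comap H inferInstance] =ᵐ[μ]
      fun ω => parentTermMean μ ε f j (fun k => g k (H ω)) + g j (H ω) := by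
  set V : Ω → Fin j → ℝ := fun ω k => ε k ω
  have hV : Measurable V := measurable_pi_lambda _ fun k => hεm k
  have hHV : IndepFun H V μ :=
    (hεH.comp (measurable_pi_lambda _ fun k => measurable_pi_apply (Fin.castLE hj.le k))
      measurable_id).symm
  have hεjH : IndepFun (ε j) H μ :=
    hεH.comp (measurable_pi_apply (⟨j, hj⟩ : Fin p)) measurable_id
  set φ : 𝓗 × (Fin j → ℝ) → ℝ :=
    fun q => f j (recursiveSolution f j ((fun k : Fin j => g k q.1) + q.2))
  have hφ : Measurable φ := by
    have := measurable_recursiveSolution f hf j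
    fun_prop
  have hXsplit : X j = fun ω => (φ (H ω, V ω) + g j (H ω)) + ε j ω := by
    funext ω
    have hsol := recursiveSolution_eq f (x := (X · ω)) (u := fun i => g i (H ω) + ε i ω)
      (fun i hi => by rw [hX i (by omega) ω, add_assoc]) j hj.le
    rw [hX j hj ω, ← hsol]
    rfl
  have hint : Integrable (fun ω => φ (H ω, V ω) + g j (H ω)) μ := by
    refine ((hXint j hj).sub (hεint j)).congr (ae_of_all _ fun ω => ?_)
    simp [hXsplit]
  calc μ[X j | MeasurableSpace.comap H inferInstance]
      =ᵐ[μ] μ[fun ω => φ (H ω, V ω) + g j (H ω) | MeasurableSpace.comap H inferInstance]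
        + μ[ε j | MeasurableSpace.comap H inferInstance] := by
        rw [hXsplit]
        exact condExp_add hint (hεint j) _
    _ =ᵐ[μ] (fun ω => parentTermMean μ ε f j (fun k => g k (H ω)) + g j (H ω))
        + fun _ => 0 := by
        refine .add (by exact hHV.condExp_comap_add_ae_eq hH hV hφ (hg j) hint) ?_
        rw [← hεmean j]
        exact hεjH.condExp_comap_right_ae_eq_integral (hεm j) hH
    _ = _ := add_zero _

end AdditiveConfounderModel

theorem proxies_recover_confounding_functions_general
    {Ω 𝓗 : Type*} {mΩ : MeasurableSpace Ω} [MeasurableSpace 𝓗]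
    (μ : Measure Ω) [IsProbabilityMeasure μ]
    (p : ℕ) (hp : 0 < p) (H : Ω → 𝓗) (hH : Measurable H)
    (ε : ℕ → Ω → ℝ) (hεm : ∀ j, Measurable (ε j))
    (hεint : ∀ j, Integrable (ε j) μ) (hεmean : ∀ j, ∫ ω, ε j ω ∂μ = 0)
    (hεH : IndepFun (fun ω (i : Fin p) => ε i ω) H μ)
    (g : ℕ → 𝓗 → ℝ) (hg : ∀ j, Measurable (g j))
    (f : (j : ℕ) → (Fin j → ℝ) → ℝ) (hf : ∀ j, Measurable (f j))
    (hf0 : ∀ v, f 0 v = 0)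
    (X : ℕ → Ω → ℝ) (hXint : ∀ j, j < p → Integrable (X j) μ)
    (hX : ∀ j, j < p → ∀ ω,
      X j ω = f j (fun k => X k ω) + g j (H ω) + ε j ω) :
    (∀ j, j < p → ∃ r : (Fin (j + 1) → ℝ) → ℝ, Measurable r ∧
      (fun ω => g j (H ω)) =ᵐ[μ]
        fun ω => r (fun k => (μ[X k | MeasurableSpace.comap H inferInstance]) ω)) ∧
    (fun ω => g 0 (H ω)) =ᵐ[μ] μ[X 0 | MeasurableSpace.comap H inferInstance] := by
  set S := fun j => μ[X j | MeasurableSpace.comap H inferInstance]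
  set χ := parentTermMean μ ε f
  have hS : ∀ j < p, S j =ᵐ[μ] fun ω => χ j (fun k => g k (H ω)) + g j (H ω) := fun j hj =>
    condExp_comap_ae_eq_parentTermMean_add μ hH hεm hεint hεmean hεH hg hf hXint hX hj
  have hχ : ∀ j, Measurable fun v => -χ j v :=
    fun j => (measurable_parentTermMean μ ε hf j).neg
  have hχ0 : χ 0 = 0 := funext fun v => by simp [χ, parentTermMean, hf0]
  refine ⟨fun j hj => ⟨fun s => recursiveSolution (fun i v => -χ i v) (j + 1) s (Fin.last j),
    (measurable_pi_apply _).comp (measurable_recursiveSolution _ hχ _),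
    ae_eq_recursiveSolution_of_ae_eq_add (a := fun i ω => g i (H ω)) hS hj⟩, ?_⟩
  filter_upwards [hS 0 hp] with ω hω
  simpa [hχ0] using hω.symm

/-- In the recursive additive-confounder model with mean-zero noises independent of `H`,
the proxies `S_j = E[X_j | H]` recover the confounding functions: for each `j` there is a
measurable `r_j` with `g_j(H) = r_j(S₀,…,S_j)` a.s.; in particular `g₀(H) = S₀` a.s.
(Indices are `0`-based.) -/
theorem proxies_recover_confounding_functions
    {Ω 𝓗 : Type*} {mΩ : MeasurableSpace Ω} [MeasurableSpace 𝓗]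
    (μ : Measure Ω) [IsProbabilityMeasure μ]
    (p : ℕ) (hp : 0 < p) (H : Ω → 𝓗) (hH : Measurable H)
    (ε : ℕ → Ω → ℝ) (hεm : ∀ j, Measurable (ε j))
    (hεint : ∀ j, Integrable (ε j) μ) (hεmean : ∀ j, ∫ ω, ε j ω ∂μ = 0)
    (hεindep : iIndepFun ε μ)
    (hεH : IndepFun (fun ω (i : Fin p) => ε i ω) H μ)
    (g : ℕ → 𝓗 → ℝ) (hg : ∀ j, Measurable (g j))
    (f : (j : ℕ) → (Fin j → ℝ) → ℝ) (hf : ∀ j, Measurable (f j))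
    (hf0 : ∀ v, f 0 v = 0)
    (X : ℕ → Ω → ℝ) (hXint : ∀ j, j < p → Integrable (X j) μ)
    (hX : ∀ j, j < p → ∀ ω,
      X j ω = f j (fun k => X k ω) + g j (H ω) + ε j ω) :
    (∀ j, j < p → ∃ r : (Fin (j + 1) → ℝ) → ℝ, Measurable r ∧
      (fun ω => g j (H ω)) =ᵐ[μ]
        fun ω => r (fun k => (μ[X k | MeasurableSpace.comap H inferInstance]) ω)) ∧
    (fun ω => g 0 (H ω)) =ᵐ[μ] μ[X 0 | MeasurableSpace.comap H inferInstance] :=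
  proxies_recover_confounding_functions_general (mΩ := mΩ) μ p hp H hH ε hεm hεint hεmean hεH g hg f
    hf hf0 X hXint hX
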